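/- Let X be a Banach lattice and let S = (S(t))_{t≥0} be a convex C₀-semigroup on X. Let (x_n)_{n∈ℕ} and (y_n)_{n∈ℕ} be sequences in X with x_n → x ∈ X and y_n → y ∈ X in norm, and let (h_n)_{n∈ℕ} be a sequence in (0,∞) with h_n ↓ 0. Then S(h_n)(x_n + y_n) − S(h_n)x_n → y in norm as n → ∞. -/

import Mathlib

/-!
Each `S (h n)` is a convex map that is bounded on bounded sets, hence continuous, and the family
`(S (h n))ₙ` is pointwise bounded because `S (h n) p → p`. By Baire's theorem it is uniformly
bounded on some ball; convexity spreads this bound to a ball around every point and turns it into a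
common local Lipschitz bound, so the family is equicontinuous. Hence
`S (h n) (xs n + ys n) - S (h n) (x + y) → 0` and `S (h n) (xs n) - S (h n) x → 0`, while
`S (h n) (x + y) - S (h n) x → y`.
-/

open Filter Topology Set Metric

section SolidNorm

variable {Y : Type*} [NormedAddCommGroup Y] [Lattice Y] [HasSolidNorm Y] [IsOrderedAddMonoid Y]

lemma norm_le_norm_add_norm_of_le_of_le {l a u : Y} (hl : l ≤ a) (hu : a ≤ u) :
    ‖a‖ ≤ ‖l‖ + ‖u‖ := by
  have habs : |a| ≤ |l| ⊔ |u| :=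
    abs_le'.2 ⟨hu.trans ((le_abs_self u).trans le_sup_right),
      (neg_le_neg hl).trans ((neg_le_abs l).trans le_sup_left)⟩
  calc ‖a‖ ≤ ‖|l| ⊔ |u|‖ := HasSolidNorm.solid (habs.trans (le_abs_self _))
    _ ≤ ‖|l|‖ + ‖|u|‖ := norm_sup_le_add _ _
    _ = ‖l‖ + ‖u‖ := by rw [norm_abs_eq_norm, norm_abs_eq_norm]

end SolidNorm

lemma EquicontinuousAt.tendsto_sub {ι X Y : Type*} [TopologicalSpace X] [SeminormedAddCommGroup Y]
    {F : ι → X → Y} {z : X} (hF : EquicontinuousAt F z) {l : Filter ι} {zs : ι → X}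
    (hzs : Tendsto zs l (𝓝 z)) : Tendsto (fun i => F i (zs i) - F i z) l (𝓝 0) := by
  have hunif : Tendsto (fun i => (F i z, F i (zs i))) l (uniformity Y) := fun U hU =>
    (hzs.eventually (hF U hU)).mono fun i hi => hi i
  rw [tendsto_uniformity_iff_dist_tendsto_zero] at hunif
  exact tendsto_zero_iff_norm_tendsto_zero.2 (by simpa only [dist_eq_norm'] using hunif)

lemma exists_closedBall_forall_norm_le_of_bddAbove {ι X Y : Type*} [PseudoMetricSpace X]
    [CompleteSpace X] [Nonempty X] [SeminormedAddCommGroup Y] {F : ι → X → Y}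
    (hF : ∀ i, Continuous (F i)) (hb : ∀ x, BddAbove (range fun i => ‖F i x‖)) :
    ∃ x₀ ε k, 0 < ε ∧ ∀ i, ∀ w ∈ closedBall x₀ ε, ‖F i w‖ ≤ k := by
  have hclosed : ∀ k : ℕ, IsClosed {w | ∀ i, ‖F i w‖ ≤ k} := fun k => by
    simp only [ofPred_forall]
    exact isClosed_iInter fun i => isClosed_le (hF i).norm continuous_const
  have hcover : ⋃ k : ℕ, {w | ∀ i, ‖F i w‖ ≤ k} = univ := eq_univ_of_forall fun w => by
    obtain ⟨B, hB⟩ := hb w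
    obtain ⟨k, hk⟩ := exists_nat_ge B
    exact mem_iUnion.2 ⟨k, fun i => (hB (mem_range_self i)).trans hk⟩
  obtain ⟨k, x₀, hx₀⟩ := nonempty_interior_of_iUnion_of_closed hclosed hcover
  obtain ⟨ε, hε, hball⟩ := nhds_basis_closedBall.mem_iff.1 (mem_interior_iff_mem_nhds.1 hx₀)
  exact ⟨x₀, ε, k, hε, fun i w hw => hball hw i⟩

section Convex

variable {X Y : Type*} [NormedAddCommGroup X] [NormedSpace ℝ X]
  [NormedAddCommGroup Y] [Lattice Y] [IsOrderedAddMonoid Y] [NormedSpace ℝ Y] {T : X → Y}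

lemma ConvexOn.exists_sub_le_of_norm_le_on_closedBall (hT : ConvexOn ℝ univ T) {c a b : X} {r M : ℝ}
    (hr : 0 < r) (hM : ∀ w ∈ closedBall c (2 * r), ‖T w‖ ≤ M)
    (ha : a ∈ closedBall c r) (hb : b ∈ closedBall c r) :
    ∃ g, T b - T a ≤ g ∧ ‖g‖ ≤ 2 * M / r * ‖b - a‖ := by
  rcases eq_or_ne b a with rfl | hne
  · exact ⟨0, by simp, by simp⟩
  set d := ‖b - a‖
  have hd : 0 < d := norm_pos_iff.2 (sub_ne_zero.2 hne)
  -- `b` divides the segment from `a` to `w` in the ratio `d : r`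
  set w := b + (r / d) • (b - a)
  set θ := d / (d + r)
  have hθ : 0 ≤ θ := by positivity
  have hw : w ∈ closedBall c (2 * r) := by
    rw [mem_closedBall_iff_norm] at hb ⊢
    calc ‖w - c‖ = ‖(b - c) + (r / d) • (b - a)‖ := by congr 1; simp only [w]; abel
      _ ≤ ‖b - c‖ + ‖(r / d) • (b - a)‖ := norm_add_le _ _
      _ = ‖b - c‖ + r := by
        rw [norm_smul, Real.norm_of_nonneg (by positivity), div_mul_cancel₀ _ hd.ne']
      _ ≤ 2 * r := by linarith
  have hcomb : θ • w + (1 - θ) • a = b := by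
    have hθw : θ * (1 + r / d) = 1 := by simp only [θ]; field_simp
    calc θ • w + (1 - θ) • a = a + (θ * (1 + r / d)) • (b - a) := by module
      _ = b := by rw [hθw, one_smul, add_sub_cancel]
  have hconv := hT.2 (mem_univ w) (mem_univ a) hθ (by simp only [θ]; bound) (add_sub_cancel θ 1)
  rw [hcomb] at hconv
  have hM0 : 0 ≤ M := (norm_nonneg _).trans (hM c (mem_closedBall_self (by positivity)))
  have hMa : ‖T a‖ ≤ M := hM a (closedBall_subset_closedBall (by linarith) ha)
  refine ⟨θ • (T w - T a), ?_, ?_⟩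
  · calc T b - T a ≤ θ • T w + (1 - θ) • T a - T a := sub_le_sub_right hconv _
      _ = θ • (T w - T a) := by module
  calc ‖θ • (T w - T a)‖ = θ * ‖T w - T a‖ := by rw [norm_smul, Real.norm_of_nonneg hθ]
    _ ≤ θ * (2 * M) := by gcongr; linarith [norm_sub_le (T w) (T a), hM w hw]
    _ ≤ d / r * (2 * M) := by gcongr; exact div_le_div_of_nonneg_left hd.le hr (by linarith)
    _ = 2 * M / r * d := by ring

variable [HasSolidNorm Y]

lemma ConvexOn.norm_sub_le_of_norm_le_on_closedBall (hT : ConvexOn ℝ univ T) {c u v : X} {r M : ℝ}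
    (hr : 0 < r) (hM : ∀ w ∈ closedBall c (2 * r), ‖T w‖ ≤ M)
    (hu : u ∈ closedBall c r) (hv : v ∈ closedBall c r) :
    ‖T u - T v‖ ≤ 4 * M / r * ‖u - v‖ := by
  obtain ⟨g, hg, hgn⟩ := hT.exists_sub_le_of_norm_le_on_closedBall hr hM hv hu
  obtain ⟨g', hg', hg'n⟩ := hT.exists_sub_le_of_norm_le_on_closedBall hr hM hu hv
  have hlow : -g' ≤ T u - T v := by rwa [neg_le, neg_sub]
  calc ‖T u - T v‖ ≤ ‖-g'‖ + ‖g‖ := norm_le_norm_add_norm_of_le_of_le hlow hg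
    _ ≤ 2 * M / r * ‖v - u‖ + 2 * M / r * ‖u - v‖ := by rw [norm_neg]; exact add_le_add hg'n hgn
    _ = 4 * M / r * ‖u - v‖ := by rw [norm_sub_rev v u]; ring

/-- Writing a point near `z` as the midpoint of a point near `x₀` and the reflection
`2 • z - x₀` of `x₀` through `z` bounds `T` from above there; convexity at `z` gives the lower
bound. -/
lemma ConvexOn.norm_le_of_norm_le_on_closedBall (hT : ConvexOn ℝ univ T) {x₀ z w : X} {ε k : ℝ}
    (hk : ∀ v ∈ closedBall x₀ ε, ‖T v‖ ≤ k) (hw : w ∈ closedBall z (ε / 2)) :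
    ‖T w‖ ≤ 2 * ‖T z‖ + k + ‖T ((2 : ℝ) • z - x₀)‖ := by
  set p := (2 : ℝ) • z - x₀
  have hmid : ∀ u v,
      T ((1 / 2 : ℝ) • u + (1 / 2 : ℝ) • v) ≤ (1 / 2 : ℝ) • T u + (1 / 2 : ℝ) • T v :=
    fun u v => hT.2 trivial trivial (by norm_num) (by norm_num) (by norm_num)
  have upper : ∀ v ∈ closedBall z (ε / 2), ∃ U, T v ≤ U ∧ ‖U‖ ≤ (k + ‖T p‖) / 2 := by
    intro v hv
    set u := x₀ + (2 : ℝ) • (v - z)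
    have hu : u ∈ closedBall x₀ ε := by
      rw [mem_closedBall_iff_norm] at hv ⊢
      rw [add_sub_cancel_left, norm_smul, Real.norm_two]
      linarith
    refine ⟨(1 / 2 : ℝ) • T u + (1 / 2 : ℝ) • T p, ?_, ?_⟩
    · convert hmid u p using 2
      simp only [u, p]
      module
    · calc ‖(1 / 2 : ℝ) • T u + (1 / 2 : ℝ) • T p‖
          ≤ ‖(1 / 2 : ℝ) • T u‖ + ‖(1 / 2 : ℝ) • T p‖ := norm_add_le _ _
        _ = (‖T u‖ + ‖T p‖) / 2 := by rw [norm_smul, norm_smul]; norm_num; ring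
        _ ≤ (k + ‖T p‖) / 2 := by linarith [hk u hu]
  obtain ⟨U, hU, hUn⟩ := upper w hw
  obtain ⟨U', hU', hU'n⟩ := upper ((2 : ℝ) • z - w) <| by
    rw [mem_closedBall_iff_norm] at hw ⊢
    rwa [show (2 : ℝ) • z - w - z = -(w - z) by module, norm_neg]
  have lower : T z + T z - U' ≤ T w := by
    have hz := hmid w ((2 : ℝ) • z - w)
    rw [show (1 / 2 : ℝ) • w + (1 / 2 : ℝ) • ((2 : ℝ) • z - w) = z by module] at hz
    have h2z : T z + T z ≤ T w + T ((2 : ℝ) • z - w) := by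
      calc T z + T z ≤ ((1 / 2 : ℝ) • T w + (1 / 2 : ℝ) • T ((2 : ℝ) • z - w))
            + ((1 / 2 : ℝ) • T w + (1 / 2 : ℝ) • T ((2 : ℝ) • z - w)) := add_le_add hz hz
        _ = T w + T ((2 : ℝ) • z - w) := by module
    exact sub_le_iff_le_add.2 (h2z.trans (add_le_add_right hU' _))
  calc ‖T w‖ ≤ ‖T z + T z - U'‖ + ‖U‖ := norm_le_norm_add_norm_of_le_of_le lower hU
    _ ≤ ‖T z‖ + ‖T z‖ + ‖U'‖ + ‖U‖ := by
      gcongr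
      exact (norm_sub_le _ _).trans (by gcongr; exact norm_add_le _ _)
    _ ≤ 2 * ‖T z‖ + k + ‖T p‖ := by linarith

theorem equicontinuousAt_of_convexOn_of_norm_le {ι : Type*} {T : ι → X → Y}
    (hT : ∀ i, ConvexOn ℝ univ (T i)) {z : X} {r M : ℝ} (hr : 0 < r)
    (hM : ∀ i, ∀ w ∈ closedBall z (2 * r), ‖T i w‖ ≤ M) : EquicontinuousAt T z := by
  refine Metric.equicontinuousAt_of_continuity_modulus (fun w : X => 4 * M / r * dist z w) ?_ T ?_
  · simpa using ((tendsto_const_nhds (x := z)).dist (tendsto_id (x := 𝓝 z))).const_mul (4 * M / r)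
  · filter_upwards [closedBall_mem_nhds z hr] with w hw i
    rw [dist_eq_norm, dist_eq_norm]
    exact (hT i).norm_sub_le_of_norm_le_on_closedBall hr (hM i) (mem_closedBall_self hr.le) hw

lemma ConvexOn.continuous_of_bounded (hT : ConvexOn ℝ univ T)
    (hb : ∀ r, 0 < r → ∃ M, ∀ x : X, ‖x‖ ≤ r → ‖T x‖ ≤ M) : Continuous T :=
  continuous_iff_continuousAt.2 fun z => by
    obtain ⟨M, hM⟩ := hb (‖z‖ + 2) (by positivity)
    refine (equicontinuousAt_of_convexOn_of_norm_le (T := fun _ : Unit => T) (fun _ => hT)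
      one_pos fun _ w hw => hM w ?_).continuousAt ()
    rw [mem_closedBall_iff_norm, mul_one] at hw
    linarith [norm_le_norm_add_norm_sub' w z]

theorem equicontinuous_of_convexOn_of_bddAbove [CompleteSpace X] {ι : Type*} {T : ι → X → Y}
    (hT : ∀ i, ConvexOn ℝ univ (T i)) (hcont : ∀ i, Continuous (T i))
    (hb : ∀ x, BddAbove (range fun i => ‖T i x‖)) : Equicontinuous T := by
  obtain ⟨x₀, ε, k, hε, hk⟩ := exists_closedBall_forall_norm_le_of_bddAbove hcont hb
  intro z
  obtain ⟨Kz, hKz⟩ := hb z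
  obtain ⟨Kp, hKp⟩ := hb ((2 : ℝ) • z - x₀)
  refine equicontinuousAt_of_convexOn_of_norm_le hT (r := ε / 4) (M := 2 * Kz + k + Kp)
    (by positivity) fun i w hw => ?_
  have := (hT i).norm_le_of_norm_le_on_closedBall (hk i)
    (by rwa [show 2 * (ε / 4) = ε / 2 by ring] at hw)
  linarith [hKz (mem_range_self i), hKp (mem_range_self i)]

end Convex

theorem convex_semigroup_cross_convergence_general
    {X : Type*} [NormedAddCommGroup X] [Lattice X] [HasSolidNorm X]
    [IsOrderedAddMonoid X] [NormedSpace ℝ X] [CompleteSpace X]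
    (S : ℝ → X → X)
    (hconv : ∀ t : ℝ, 0 ≤ t → ∀ x y : X, ∀ a : ℝ, 0 ≤ a → a ≤ 1 →
      S t (a • x + (1 - a) • y) ≤ a • S t x + (1 - a) • S t y)
    (hbdd : ∀ t : ℝ, 0 ≤ t → ∀ r : ℝ, 0 < r → ∃ M : ℝ, ∀ x : X, ‖x‖ ≤ r → ‖S t x‖ ≤ M)
    (hc0 : ∀ x : X, Tendsto (fun t : ℝ => S t x) (𝓝[>] (0 : ℝ)) (𝓝 x))
    (xs ys : ℕ → X) (x y : X)
    (hx : Tendsto xs atTop (𝓝 x)) (hy : Tendsto ys atTop (𝓝 y))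
    (h : ℕ → ℝ) (hpos : ∀ n, 0 < h n)
    (hh : Tendsto h atTop (𝓝 (0 : ℝ))) :
    Tendsto (fun n => S (h n) (xs n + ys n) - S (h n) (xs n)) atTop (𝓝 y) := by
  have hconvex : ∀ n, ConvexOn ℝ univ (S (h n)) := fun n =>
    ⟨convex_univ, fun u _ v _ a b ha hb hab => by
      obtain rfl : b = 1 - a := by linarith
      exact hconv _ (hpos n).le u v a ha (by linarith)⟩
  have hlim : ∀ p, Tendsto (fun n => S (h n) p) atTop (𝓝 p) := fun p =>
    (hc0 p).comp (tendsto_nhdsWithin_iff.2 ⟨hh, Eventually.of_forall hpos⟩)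
  have hequi : Equicontinuous fun n => S (h n) :=
    equicontinuous_of_convexOn_of_bddAbove hconvex
      (fun n => (hconvex n).continuous_of_bounded (hbdd _ (hpos n).le))
      fun p => (hlim p).norm.bddAbove_range
  have hsum := (hequi (x + y)).tendsto_sub (hx.add hy)
  have hfst := (hequi x).tendsto_sub hx
  convert (hsum.add ((hlim (x + y)).sub (hlim x))).sub hfst using 2 with n
  · abel
  · simp

/-- For a convex C₀-semigroup `S`, sequences `xₙ → x`, `yₙ → y` and `hₙ ↓ 0`
with `hₙ > 0`, one has `S(hₙ)(xₙ + yₙ) − S(hₙ)xₙ → y` in norm. -/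
theorem convex_semigroup_cross_convergence
    {X : Type*} [NormedAddCommGroup X] [Lattice X] [HasSolidNorm X]
    [IsOrderedAddMonoid X] [NormedSpace ℝ X] [CompleteSpace X]
    [PosSMulStrictMono ℝ X]
    (S : ℝ → X → X)
    (hconv : ∀ t : ℝ, 0 ≤ t → ∀ x y : X, ∀ a : ℝ, 0 ≤ a → a ≤ 1 →
      S t (a • x + (1 - a) • y) ≤ a • S t x + (1 - a) • S t y)
    (hbdd : ∀ t : ℝ, 0 ≤ t → ∀ r : ℝ, 0 < r → ∃ M : ℝ, ∀ x : X, ‖x‖ ≤ r → ‖S t x‖ ≤ M)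
    (hid : ∀ x : X, S 0 x = x)
    (hsg : ∀ s t : ℝ, 0 ≤ s → 0 ≤ t → ∀ x : X, S (t + s) x = S t (S s x))
    (hc0 : ∀ x : X, Tendsto (fun t : ℝ => S t x) (𝓝[>] (0 : ℝ)) (𝓝 x))
    (xs ys : ℕ → X) (x y : X)
    (hx : Tendsto xs atTop (𝓝 x)) (hy : Tendsto ys atTop (𝓝 y))
    (h : ℕ → ℝ) (hpos : ∀ n, 0 < h n) (hanti : Antitone h)
    (hh : Tendsto h atTop (𝓝 (0 : ℝ))) :
    Tendsto (fun n => S (h n) (xs n + ys n) - S (h n) (xs n)) atTop (𝓝 y) :=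
  convex_semigroup_cross_convergence_general S hconv hbdd hc0 xs ys x y hx hy h hpos hh
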